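/- Suppose ε_p' > 0 in Algorithm 2 (so Δ = 0), N : ℝ^d → ℝ is 1-strongly convex and globally differentiable, and ℓ : ℝ → ℝ is convex and differentiable at all points with |ℓ'(z)| ≤ 1 for all z. Let f* = argmin_f J(f, D) and let f_priv = argmin_f [J(f, D) + (1/n)bᵀf] where b ∈ ℝ^d is the noise vector of Algorithm 2 (with ‖b‖₂ distributed as Gamma(d, 2/ε_p)). Then with probability at least 1 − δ over the draw of b, J(f_priv, D) ≤ J(f*, D) + 4d²log²(d/δ)/(Λ n² ε_p²). -/

import Mathlib

/-!
Since `J(·, D)` is `Λ`-strongly convex, comparing the minimizers of `J` and of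
`J + ⟪b / n, ·⟫` gives `‖f_priv - f*‖ ≤ ‖b‖ / (nΛ)` and hence
`J(f_priv) ≤ J(f*) + ‖b‖² / (n²Λ)` for every `b`. It remains to show that
`‖b‖ ≤ R = d log(d/δ)/β`, `β = ε_p/2`, with probability at least `1 - δ`. In polar
coordinates the radius has density proportional to `y^(d-1) e^(-βy)`; bounding
`y^(d-1) e^(-β(d-1)y/d)` by its maximum `(d/β)^(d-1) e^(-(d-1))` leaves the exponential tail
`∫_R^∞ e^(-βy/d) = δ/β`, and the resulting ratio `d^(d-1) e^(-(d-1)) δ / (d-1)!` is at most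
`δ` because `(m+1)^m ≤ e^m m!`.
-/

open MeasureTheory Real Set

noncomputable section

abbrev Vec (d : ℕ) := EuclideanSpace ℝ (Fin d)

abbrev Dataset (d n : ℕ) := Fin n → Vec d × ℝ

/-- All data points have norm at most 1 and labels in {-1, +1}. -/
def ValidDataset {d n : ℕ} (D : Dataset d n) : Prop :=
  ∀ i, ‖(D i).1‖ ≤ 1 ∧ ((D i).2 = 1 ∨ (D i).2 = -1)

/-- Two datasets differ in (at most) one entry. -/
def Neighbor {d n : ℕ} (D D' : Dataset d n) : Prop :=
  ∃ j, ∀ i, i ≠ j → D i = D' i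

/-- Regularized empirical risk J(f, D). -/
def J {d n : ℕ} (ℓ : ℝ → ℝ) (N : Vec d → ℝ) (Λ : ℝ) (D : Dataset d n) (f : Vec d) : ℝ :=
  (1 / (n : ℝ)) * ∑ i, ℓ ((D i).2 * (inner ℝ f (D i).1 : ℝ)) + Λ * N f

/-- `lam`-strong convexity. -/
def SConvex {d : ℕ} (lam : ℝ) (H : Vec d → ℝ) : Prop :=
  ∀ α : ℝ, α ∈ Set.Ioo (0 : ℝ) 1 → ∀ f g : Vec d,
    H (α • f + (1 - α) • g) ≤
      α * H f + (1 - α) * H g - (lam / 2) * α * (1 - α) * ‖f - g‖ ^ 2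

/-- Unnormalized measure on ℝ^d with density e^{-β‖b‖₂}. -/
def laplaceLike (d : ℕ) (β : ℝ) : Measure (Vec d) :=
  volume.withDensity fun b => ENNReal.ofReal (Real.exp (-β * ‖b‖))

/-- The probability measure on ℝ^d with density proportional to e^{-β‖b‖₂}. -/
def noiseP (d : ℕ) (β : ℝ) : Measure (Vec d) :=
  (laplaceLike d β Set.univ)⁻¹ • laplaceLike d β

/-- ε-differential privacy for a randomized map from datasets to classifiers in ℝ^d. -/
def DiffPrivate {d n : ℕ} (ε : ℝ) (A : Dataset d n → Measure (Vec d)) : Prop :=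
  ∀ D D' : Dataset d n, ValidDataset D → ValidDataset D' → Neighbor D D' →
    ∀ S : Set (Vec d), MeasurableSet S →
      A D S ≤ ENNReal.ofReal (Real.exp ε) * A D' S

/-- The slack term log(1 + 2c/(nΛ) + c²/(n²Λ²)) of Algorithm 2. -/
def slack (c Λ : ℝ) (n : ℕ) : ℝ :=
  Real.log (1 + 2 * c / (n * Λ) + c ^ 2 / (n ^ 2 * Λ ^ 2))

/-- The adjusted privacy parameter ε_p' of Algorithm 2. -/
def objEps (εp c Λ : ℝ) (n : ℕ) : ℝ :=
  if 0 < εp - slack c Λ n then εp - slack c Λ n else εp / 2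

/-- The additional regularization Δ of Algorithm 2. -/
def objDelta (εp c Λ : ℝ) (n : ℕ) : ℝ :=
  if 0 < εp - slack c Λ n then 0 else c / (n * (Real.exp (εp / 4) - 1)) - Λ

/-- The perturbed objective of Algorithm 2: J(f,D) + (1/n)bᵀf + (Δ/2)‖f‖². -/
def Jpriv {d n : ℕ} (ℓ : ℝ → ℝ) (N : Vec d → ℝ) (Λ Δ : ℝ) (D : Dataset d n)
    (b f : Vec d) : ℝ :=
  J ℓ N Λ D f + (1 / (n : ℝ)) * (inner ℝ b f : ℝ) + (Δ / 2) * ‖f‖ ^ 2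

/-- The regularizer N(f) = ½‖f‖². -/
def halfNormSq {d : ℕ} (f : Vec d) : ℝ := ‖f‖ ^ 2 / 2

open Filter Topology Metric Module
open scoped Nat

section StrongConvexity

variable {d : ℕ} {a b : ℝ} {H G : Vec d → ℝ}

theorem ConvexOn.sConvex_zero (hG : ConvexOn ℝ univ G) : SConvex 0 G := by
  intro α hα f g
  simpa using hG.2 (mem_univ f) (mem_univ g) hα.1.le (sub_nonneg.2 hα.2.le) (by ring)

theorem SConvex.add (hH : SConvex a H) (hG : SConvex b G) :
    SConvex (a + b) (fun f => H f + G f) := by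
  intro α hα f g
  linarith [hH α hα f g, hG α hα f g]

theorem SConvex.const_mul (hH : SConvex a H) {c : ℝ} (hc : 0 ≤ c) :
    SConvex (c * a) (fun f => c * H f) := by
  intro α hα f g
  linarith [mul_le_mul_of_nonneg_left (hH α hα f g) hc]

theorem SConvex.add_sq_le_of_isMin (hH : SConvex a H) {f₀ : Vec d} (hmin : ∀ g, H f₀ ≤ H g)
    (g : Vec d) : H f₀ + a / 2 * ‖g - f₀‖ ^ 2 ≤ H g := by
  have key : ∀ α ∈ Ioo (0 : ℝ) 1, a / 2 * (1 - α) * ‖g - f₀‖ ^ 2 ≤ H g - H f₀ := by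
    intro α hα
    have := hH α hα g f₀
    have := hmin (α • g + (1 - α) • f₀)
    exact le_of_mul_le_mul_left (by nlinarith) hα.1
  have hlim : Tendsto (fun α : ℝ => a / 2 * (1 - α) * ‖g - f₀‖ ^ 2) (𝓝[>] 0)
      (𝓝 (a / 2 * (1 - 0) * ‖g - f₀‖ ^ 2)) :=
    (Continuous.tendsto (by fun_prop) 0).mono_left nhdsWithin_le_nhds
  have := le_of_tendsto hlim (eventually_of_mem (Ioo_mem_nhdsGT one_pos) key)
  linarith

theorem SConvex.le_add_norm_sq_div_of_isMin_add_inner (ha : 0 < a) (hH : SConvex a H)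
    (v : Vec d) {f₀ f₁ : Vec d} (h₀ : ∀ g, H f₀ ≤ H g)
    (h₁ : ∀ g, H f₁ + inner ℝ v f₁ ≤ H g + inner ℝ v g) :
    H f₁ ≤ H f₀ + ‖v‖ ^ 2 / a := by
  have hG : SConvex a (fun f => H f + inner ℝ v f) := by
    simpa using hH.add ((innerₛₗ ℝ v).convexOn convex_univ).sConvex_zero
  have e₀ := hH.add_sq_le_of_isMin h₀ f₁
  have e₁ := hG.add_sq_le_of_isMin h₁ f₀
  set t := ‖f₁ - f₀‖
  have hCS : inner ℝ v (f₀ - f₁) ≤ ‖v‖ * t :=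
    (real_inner_le_norm _ _).trans_eq (by rw [norm_sub_rev])
  rw [inner_sub_right] at hCS
  rw [norm_sub_rev] at e₁
  have hgap : a * t ^ 2 ≤ ‖v‖ * t := by linarith
  rw [← sub_le_iff_le_add', le_div_iff₀ ha]
  -- `‖v‖² - a ‖v‖ t = (‖v‖ - a t)² + a (‖v‖ t - a t²)`
  nlinarith [sq_nonneg (‖v‖ - a * t), mul_nonneg ha.le (sub_nonneg.2 hgap)]

end StrongConvexity

theorem convexOn_empiricalLoss {d n : ℕ} {ℓ : ℝ → ℝ} (hℓ : ConvexOn ℝ univ ℓ)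
    (D : Dataset d n) :
    ConvexOn ℝ univ (fun f : Vec d => (1 / (n : ℝ)) * ∑ i, ℓ ((D i).2 * inner ℝ f (D i).1)) := by
  have hterm (i : Fin n) :
      ConvexOn ℝ univ (fun f : Vec d => ℓ ((D i).2 * inner ℝ f (D i).1)) := by
    simpa [Function.comp_def, real_inner_comm] using
      hℓ.comp_linearMap ((D i).2 • innerₛₗ ℝ (D i).1)
  have hsum := Finset.univ.sum_induction (fun i f => ℓ ((D i).2 * inner ℝ f (D i).1))
    (ConvexOn ℝ univ) (fun _ _ => ConvexOn.add) (convexOn_const 0 convex_univ) fun i _ => hterm i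
  rw [Finset.sum_fn] at hsum
  simpa using hsum.smul (by positivity : (0 : ℝ) ≤ 1 / n)

theorem sConvex_J {d n : ℕ} {ℓ : ℝ → ℝ} {N : Vec d → ℝ} {Λ : ℝ} (hΛ : 0 ≤ Λ)
    (hN : SConvex 1 N) (hℓ : ConvexOn ℝ univ ℓ) (D : Dataset d n) : SConvex Λ (J ℓ N Λ D) := by
  have := (convexOn_empiricalLoss hℓ D).sConvex_zero.add (hN.const_mul hΛ)
  rwa [zero_add, mul_one] at this

section RadialTail

lemma pow_mul_exp_neg_mul_le (k : ℕ) {β y : ℝ} (hβ : 0 < β) (hy : 0 ≤ y) :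
    y ^ k * exp (-β * y) ≤ ((k + 1) / β) ^ k * exp (-k) * exp (-(β / (k + 1)) * y) := by
  set t := β * y / (k + 1) with ht
  have hexp : t ≤ exp (t - 1) := by linarith [add_one_le_exp (t - 1)]
  calc y ^ k * exp (-β * y) = ((k + 1) / β) ^ k * t ^ k * exp (-β * y) := by
        rw [ht, ← mul_pow]; field_simp
    _ ≤ ((k + 1) / β) ^ k * exp (t - 1) ^ k * exp (-β * y) := by gcongr
    _ = ((k + 1) / β) ^ k * exp (-k) * exp (-(β / (k + 1)) * y) := by
        rw [← exp_nat_mul, mul_assoc, mul_assoc, ← exp_add, ← exp_add, ht]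
        congr 2
        field_simp
        ring

lemma add_one_pow_le_exp_mul_factorial (k : ℕ) : ((k : ℝ) + 1) ^ k ≤ exp k * k ! := by
  induction k with
  | zero => simp
  | succ k ih =>
    calc ((↑(k + 1) : ℝ) + 1) ^ (k + 1)
        = ((1 + ((↑(k + 1) : ℝ))⁻¹) * ((k : ℝ) + 1)) ^ (k + 1) := by
          congr 1; push_cast; field_simp
      _ = (1 + ((↑(k + 1) : ℝ))⁻¹) ^ (k + 1) * ((k + 1) * ((k : ℝ) + 1) ^ k) := by
          rw [mul_pow, pow_succ' ((k : ℝ) + 1)]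
      _ ≤ exp 1 * ((k + 1) * (exp k * k !)) := by gcongr; exact one_add_inv_pow_le_exp
      _ = exp ↑(k + 1) * ↑(k + 1)! := by
          push_cast [Nat.factorial_succ, exp_add]; ring

lemma integrableOn_pow_mul_exp_neg_mul_Ioi (k : ℕ) {β : ℝ} (hβ : 0 < β) :
    IntegrableOn (fun y : ℝ => y ^ k * exp (-β * y)) (Ioi 0) := by
  refine (integrableOn_rpow_mul_exp_neg_mul_rpow (s := k) (p := 1)
    (neg_one_lt_zero.trans_le k.cast_nonneg) one_pos hβ).congr_fun (fun y _ => ?_)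
    measurableSet_Ioi
  simp

lemma integral_pow_mul_exp_neg_mul_Ioi (k : ℕ) {β : ℝ} (hβ : 0 < β) :
    ∫ y in Ioi (0 : ℝ), y ^ k * exp (-β * y) = k ! / β ^ (k + 1) := by
  have h := integral_rpow_mul_exp_neg_mul_Ioi (a := k + 1) (by positivity) hβ
  rw [Gamma_nat_eq_factorial, add_sub_cancel_right] at h
  norm_cast at h
  simp only [neg_mul] at h ⊢
  rw [h, one_div_pow, one_div_mul_eq_div]

lemma integral_Ioi_pow_mul_exp_neg_mul_le (k : ℕ) {β δ : ℝ} (hβ : 0 < β) (hδ : 0 < δ)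
    (hδk : δ ≤ k + 1) :
    ∫ y in Ioi ((k + 1) * log ((k + 1) / δ) / β), y ^ k * exp (-β * y) ≤
      δ * ∫ y in Ioi (0 : ℝ), y ^ k * exp (-β * y) := by
  set R := (k + 1) * log ((k + 1) / δ) / β with hR
  have hR0 : 0 ≤ R := by have := log_nonneg ((one_le_div hδ).2 hδk); positivity
  set c := β / (k + 1) with hc
  have hcR : exp (-c * R) = δ / (k + 1) := by
    rw [show -c * R = -log ((k + 1) / δ) by rw [hc, hR]; field_simp, exp_neg,
      exp_log (by positivity), inv_div]
  have hc_neg : -c < 0 := neg_neg_of_pos (by positivity)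
  calc ∫ y in Ioi R, y ^ k * exp (-β * y)
      ≤ ∫ y in Ioi R, ((k + 1) / β) ^ k * exp (-k) * exp (-c * y) := by
        refine integral_mono_of_nonneg ?_ ((integrableOn_exp_mul_Ioi hc_neg R).const_mul _) ?_
        · filter_upwards [ae_restrict_mem measurableSet_Ioi] with y hy
          have : 0 ≤ y := hR0.trans hy.le
          positivity
        · filter_upwards [ae_restrict_mem measurableSet_Ioi] with y hy
          exact pow_mul_exp_neg_mul_le k hβ (hR0.trans hy.le)
    _ = δ * (((k + 1) ^ k * exp (-k)) / β ^ (k + 1)) := by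
        rw [integral_const_mul, integral_exp_mul_Ioi hc_neg, neg_div_neg_eq, hcR, hc, div_pow,
          pow_succ]
        field_simp
    _ ≤ δ * (k ! / β ^ (k + 1)) := by
        gcongr
        rw [exp_neg, ← div_eq_mul_inv, div_le_iff₀ (exp_pos _), mul_comm]
        exact add_one_pow_le_exp_mul_factorial k
    _ = δ * ∫ y in Ioi (0 : ℝ), y ^ k * exp (-β * y) := by
        rw [integral_pow_mul_exp_neg_mul_Ioi k hβ]

end RadialTail

section HaarMeasure

variable {E : Type*} [NormedAddCommGroup E] [NormedSpace ℝ E] [FiniteDimensional ℝ E]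
  [MeasurableSpace E] [BorelSpace E] (μ : Measure E) [μ.IsAddHaarMeasure]

lemma setIntegral_compl_closedBall_fun_norm [Nontrivial E] (f : ℝ → ℝ) {R : ℝ}
    (hR : 0 ≤ R) :
    ∫ x in (closedBall (0 : E) R)ᶜ, f ‖x‖ ∂μ =
      finrank ℝ E • μ.real (ball 0 1) • ∫ y in Ioi R, y ^ (finrank ℝ E - 1) • f y := by
  have hball : (closedBall (0 : E) R)ᶜ = (‖·‖) ⁻¹' Ioi R := by ext; simp
  have hind (x : E) :
      ((‖·‖) ⁻¹' Ioi R).indicator (fun x => f ‖x‖) x = (Ioi R).indicator f ‖x‖ :=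
    indicator_comp_right _
  simp_rw [← integral_indicator measurableSet_closedBall.compl, hball, hind,
    integral_fun_norm_addHaar μ ((Ioi R).indicator f),
    ← indicator_smul_apply (Ioi R) (fun y : ℝ => y ^ (finrank ℝ E - 1)) f]
  rw [setIntegral_indicator measurableSet_Ioi, Ioi_inter_Ioi, max_eq_right hR]

lemma integrable_exp_neg_mul_norm {β : ℝ} (hβ : 0 < β) :
    Integrable (fun x => exp (-β * ‖x‖)) μ := by
  rcases subsingleton_or_nontrivial E with hE | hE
  · exact .of_finite
  · exact (integrable_fun_norm_addHaar μ (f := fun y => exp (-β * y))).2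
      (by simpa only [smul_eq_mul] using integrableOn_pow_mul_exp_neg_mul_Ioi _ hβ)

lemma one_sub_mul_integral_le_setIntegral_closedBall {β δ : ℝ} (hβ : 0 < β) (hδ : 0 < δ)
    (hδ1 : δ ≤ 1) :
    (1 - δ) * ∫ x, exp (-β * ‖x‖) ∂μ ≤
      ∫ x in closedBall (0 : E) (finrank ℝ E * log (finrank ℝ E / δ) / β),
        exp (-β * ‖x‖) ∂μ := by
  set R := finrank ℝ E * log (finrank ℝ E / δ) / β with hR
  suffices ∫ x in (closedBall 0 R)ᶜ, exp (-β * ‖x‖) ∂μ ≤ δ * ∫ x, exp (-β * ‖x‖) ∂μ by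
    linarith [integral_add_compl (s := closedBall 0 R) measurableSet_closedBall
      (integrable_exp_neg_mul_norm μ hβ)]
  rcases subsingleton_or_nontrivial E with hE | hE
  · have hempty : (closedBall (0 : E) R)ᶜ = ∅ := by
      simpa [hR, finrank_zero_of_subsingleton] using
        Subsingleton.eq_univ_of_nonempty (singleton_nonempty (0 : E))
    rw [hempty, setIntegral_empty]
    exact mul_nonneg hδ.le (integral_nonneg fun _ => (exp_pos _).le)
  · obtain ⟨k, hk⟩ := Nat.exists_eq_succ_of_ne_zero (finrank_pos (R := ℝ) (M := E)).ne'
    have hδk : δ ≤ k + 1 := by linarith [k.cast_nonneg (α := ℝ)]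
    have hR0 : 0 ≤ R := by
      have := log_nonneg ((one_le_div hδ).2 hδk)
      rw [hR, hk]
      push_cast
      positivity
    have htail := integral_Ioi_pow_mul_exp_neg_mul_le k hβ hδ hδk
    rw [setIntegral_compl_closedBall_fun_norm μ (fun y => exp (-β * y)) hR0,
      integral_fun_norm_addHaar μ (fun y => exp (-β * y))]
    simp only [hk, nsmul_eq_mul, smul_eq_mul, hR] at htail ⊢
    push_cast at htail ⊢
    calc _ ≤ (k + 1 : ℝ) * (μ.real (ball 0 1) * (δ * ∫ y in Ioi 0, y ^ k * exp (-β * y))) :=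
          by gcongr
      _ = _ := by ring

end HaarMeasure

lemma laplaceLike_apply {d : ℕ} {β : ℝ} (hβ : 0 < β) {S : Set (Vec d)}
    (hS : MeasurableSet S) :
    laplaceLike d β S = ENNReal.ofReal (∫ x in S, exp (-β * ‖x‖)) := by
  rw [laplaceLike, withDensity_apply _ hS,
    ofReal_integral_eq_lintegral_ofReal (integrable_exp_neg_mul_norm volume hβ).integrableOn
      (ae_of_all _ fun _ => (exp_pos _).le)]

lemma ofReal_one_sub_le_noiseP_closedBall {d : ℕ} {β δ : ℝ} (hβ : 0 < β) (hδ : 0 < δ)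
    (hδ1 : δ ≤ 1) :
    ENNReal.ofReal (1 - δ) ≤ noiseP d β (closedBall 0 (d * log (d / δ) / β)) := by
  have hA : 0 < ∫ x : Vec d, exp (-β * ‖x‖) :=
    integral_exp_pos (integrable_exp_neg_mul_norm volume hβ)
  have hball :=
    one_sub_mul_integral_le_setIntegral_closedBall (volume : Measure (Vec d)) hβ hδ hδ1
  rw [finrank_euclideanSpace_fin] at hball
  rw [noiseP, Measure.smul_apply, smul_eq_mul, laplaceLike_apply hβ MeasurableSet.univ,
    laplaceLike_apply hβ measurableSet_closedBall, setIntegral_univ, ← ENNReal.div_eq_inv_mul,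
    ← ENNReal.ofReal_div_of_pos hA]
  exact ENNReal.ofReal_le_ofReal ((le_div_iff₀ hA).2 hball)

theorem objective_perturbation_training_error_general
    (d n : ℕ) (Λ εp δ : ℝ)
    (hΛ : 0 < Λ) (hεp : 0 < εp) (hδ : δ ∈ Set.Ioo (0:ℝ) 1)
    (ℓ : ℝ → ℝ) (N : Vec d → ℝ)
    (hNsc : SConvex 1 N)
    (hℓconv : ConvexOn ℝ Set.univ ℓ)
    (D : Dataset d n)
    (fstar : Vec d) (hfstar : ∀ g : Vec d, J ℓ N Λ D fstar ≤ J ℓ N Λ D g)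
    (fout : Vec d → Vec d)
    (hfout : ∀ b g : Vec d,
      J ℓ N Λ D (fout b) + (1 / (n : ℝ)) * (inner ℝ b (fout b) : ℝ) ≤
        J ℓ N Λ D g + (1 / (n : ℝ)) * (inner ℝ b g : ℝ)) :
    ENNReal.ofReal (1 - δ) ≤
      noiseP d (εp / 2)
        {b : Vec d | J ℓ N Λ D (fout b) ≤ J ℓ N Λ D fstar +
          4 * (d : ℝ) ^ 2 * Real.log ((d : ℝ) / δ) ^ 2 /
            (Λ * (n : ℝ) ^ 2 * εp ^ 2)} := by
  obtain ⟨hδ0, hδ1⟩ := hδ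
  set R := d * log (d / δ) / (εp / 2)
  refine (ofReal_one_sub_le_noiseP_closedBall (half_pos hεp) hδ0 hδ1.le).trans
    (measure_mono fun b hb => ?_)
  have hbR : ‖b‖ ≤ R := mem_closedBall_zero_iff.1 hb
  have hpriv := (sConvex_J hΛ.le hNsc hℓconv D).le_add_norm_sq_div_of_isMin_add_inner hΛ
    ((1 / (n : ℝ)) • b) hfstar fun g => by simpa only [real_inner_smul_left] using hfout b g
  have hnorm : ‖(1 / (n : ℝ)) • b‖ = ‖b‖ / n := by
    rw [norm_smul, Real.norm_of_nonneg (by positivity), one_div_mul_eq_div]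
  calc J ℓ N Λ D (fout b) ≤ J ℓ N Λ D fstar + (‖b‖ / n) ^ 2 / Λ := hnorm ▸ hpriv
    _ ≤ J ℓ N Λ D fstar + (R / n) ^ 2 / Λ := by gcongr
    _ = _ := by ring

/-- Lemma 18: suppose ε_p' > 0 in Algorithm 2 (so Δ = 0), N is
1-strongly convex and globally differentiable, and ℓ is convex and differentiable with
|ℓ'(z)| ≤ 1. If f* minimizes J(·,D) and f_priv minimizes J(·,D) + (1/n)bᵀ·, with b drawn
from the density ∝ e^{-(ε_p/2)‖b‖} (so ‖b‖ ~ Gamma(d, 2/ε_p)), then with probability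
≥ 1 − δ over b, J(f_priv, D) ≤ J(f*, D) + 4d²log²(d/δ)/(Λn²ε_p²). -/
theorem objective_perturbation_training_error
    (d n : ℕ) (hn : 0 < n) (Λ εp δ : ℝ)
    (hΛ : 0 < Λ) (hεp : 0 < εp) (hδ : δ ∈ Set.Ioo (0:ℝ) 1)
    (ℓ : ℝ → ℝ) (N : Vec d → ℝ)
    (hNsc : SConvex 1 N) (hNdiff : Differentiable ℝ N)
    (hℓconv : ConvexOn ℝ Set.univ ℓ) (hℓdiff : Differentiable ℝ ℓ)
    (hℓderiv : ∀ z : ℝ, |deriv ℓ z| ≤ 1)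
    (D : Dataset d n) (hD : ValidDataset D)
    (fstar : Vec d) (hfstar : ∀ g : Vec d, J ℓ N Λ D fstar ≤ J ℓ N Λ D g)
    (fout : Vec d → Vec d)
    (hfout : ∀ b g : Vec d,
      J ℓ N Λ D (fout b) + (1 / (n : ℝ)) * (inner ℝ b (fout b) : ℝ) ≤
        J ℓ N Λ D g + (1 / (n : ℝ)) * (inner ℝ b g : ℝ)) :
    ENNReal.ofReal (1 - δ) ≤
      noiseP d (εp / 2)
        {b : Vec d | J ℓ N Λ D (fout b) ≤ J ℓ N Λ D fstar +
          4 * (d : ℝ) ^ 2 * Real.log ((d : ℝ) / δ) ^ 2 /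
            (Λ * (n : ℝ) ^ 2 * εp ^ 2)} :=
  objective_perturbation_training_error_general d n Λ εp δ hΛ hεp hδ ℓ N hNsc hℓconv D fstar hfstar
    fout hfout

end
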